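/- Let d ≥ 3. For λ > 2√((d−1)/d), define ρ²(λ) = f(λ)/h(λ) where f(λ) = λ + g(λ), h(λ) = −1/g(λ), and g(λ) = (−λd + d√(λ² − 4(d−1)/d))/(2(d−1)). Then ρ²(λ) = −g(λ)(λ + g(λ)) ∈ (0, 1) for all sufficiently large λ > 2√((d−1)/d); in particular ρ²(λ) → 1 as λ → ∞. -/

import Mathlib

open Filter

noncomputable def g (d : ℕ) (z : ℝ) : ℝ :=
  (-z * d + d * Real.sqrt (z ^ 2 - 4 * ((d : ℝ) - 1) / d)) / (2 * ((d : ℝ) - 1))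

lemma g_sqrt_nn (d : ℕ) (hd : 3 ≤ d) (z : ℝ) (hz : 2 ≤ z) :
    0 ≤ z ^ 2 - 4 * ((d : ℝ) - 1) / d := by
  have hd3 : (3 : ℝ) ≤ d := by exact_mod_cast hd
  have hd0 : (0 : ℝ) < d := by linarith
  have hfrac : 4 * ((d : ℝ) - 1) / d ≤ 4 := by
    rw [div_le_iff₀ hd0]; nlinarith
  nlinarith

lemma g_key (d : ℕ) (hd : 3 ≤ d) (z : ℝ) (hz : 2 ≤ z) :
    -g d z * (z + g d z)
      = 1 - 4 / (d * (z + Real.sqrt (z ^ 2 - 4 * ((d : ℝ) - 1) / d)) ^ 2) := by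
  have hd3 : (3 : ℝ) ≤ d := by exact_mod_cast hd
  have hd0 : (0 : ℝ) < d := by linarith
  have hnn := g_sqrt_nn d hd z hz
  set s := Real.sqrt (z ^ 2 - 4 * ((d : ℝ) - 1) / d) with hs
  have hs2 : s ^ 2 = z ^ 2 - 4 * ((d : ℝ) - 1) / d := Real.sq_sqrt hnn
  have hsnn : 0 ≤ s := Real.sqrt_nonneg _
  have hzs : 0 < z + s := by linarith
  have hd1' : (d : ℝ) - 1 ≠ 0 := by linarith
  unfold g
  rw [← hs]
  field_simp
  have hs2' : (d : ℝ) * s ^ 2 = (d : ℝ) * z ^ 2 - 4 * ((d : ℝ) - 1) := by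
    rw [hs2]; field_simp
  linear_combination (4 * ((d : ℝ) - 1) - (d : ℝ) * (((d : ℝ) - 2) * z + (d : ℝ) * s) * (z + s)) * hs2'

theorem stmt_14 (d : ℕ) (hd : 3 ≤ d) :
    (∀ᶠ lam in atTop,
      lam > 2 * Real.sqrt (((d : ℝ) - 1) / d) ∧
        -g d lam * (lam + g d lam) ∈ Set.Ioo (0 : ℝ) 1) ∧
    Tendsto (fun lam => -g d lam * (lam + g d lam)) atTop (nhds 1) := by
  have hd3 : (3 : ℝ) ≤ d := by exact_mod_cast hd
  have hd0 : (0 : ℝ) < d := by linarith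
  -- the denominator tends to atTop
  have hden : Tendsto (fun z : ℝ =>
      (d : ℝ) * (z + Real.sqrt (z ^ 2 - 4 * ((d : ℝ) - 1) / d)) ^ 2) atTop atTop := by
    refine tendsto_atTop_mono' atTop ?_ (tendsto_pow_atTop (n := 2) (by norm_num))
    · filter_upwards [eventually_ge_atTop (2 : ℝ)] with z hz
      have hsnn : 0 ≤ Real.sqrt (z ^ 2 - 4 * ((d : ℝ) - 1) / d) := Real.sqrt_nonneg _
      nlinarith [sq_nonneg (Real.sqrt (z ^ 2 - 4 * ((d : ℝ) - 1) / d))]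
  have h0 : Tendsto (fun z : ℝ =>
      4 / ((d : ℝ) * (z + Real.sqrt (z ^ 2 - 4 * ((d : ℝ) - 1) / d)) ^ 2)) atTop (nhds 0) :=
    tendsto_const_nhds.div_atTop hden
  have hT : Tendsto (fun lam => -g d lam * (lam + g d lam)) atTop (nhds 1) := by
    have h1 : Tendsto (fun z : ℝ =>
        1 - 4 / ((d : ℝ) * (z + Real.sqrt (z ^ 2 - 4 * ((d : ℝ) - 1) / d)) ^ 2))
        atTop (nhds 1) := by
      simpa using tendsto_const_nhds.sub h0
    apply h1.congr'
    filter_upwards [eventually_ge_atTop (2 : ℝ)] with z hz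
    exact (g_key d hd z hz).symm
  refine ⟨?_, hT⟩
  have hpos : ∀ᶠ lam in atTop, 0 < -g d lam * (lam + g d lam) :=
    hT.eventually (eventually_gt_nhds zero_lt_one)
  filter_upwards [eventually_ge_atTop (2 : ℝ), eventually_gt_atTop (2 : ℝ), hpos]
    with z hz2 hz2' hp
  have hsq1 : Real.sqrt (((d : ℝ) - 1) / d) ≤ 1 := by
    rw [Real.sqrt_le_one]
    rw [div_le_one hd0]; linarith
  refine ⟨by linarith, hp, ?_⟩
  rw [g_key d hd z hz2]
  have hsnn : 0 ≤ Real.sqrt (z ^ 2 - 4 * ((d : ℝ) - 1) / d) := Real.sqrt_nonneg _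
  have hdenpos : 0 < (d : ℝ) * (z + Real.sqrt (z ^ 2 - 4 * ((d : ℝ) - 1) / d)) ^ 2 := by
    positivity
  have : 0 < 4 / ((d : ℝ) * (z + Real.sqrt (z ^ 2 - 4 * ((d : ℝ) - 1) / d)) ^ 2) := by
    positivity
  linarith
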